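/- For every L ≥ 1 there exists a constant C(L) > 0 with the following property. Let h̃ : ℝ → ℝ be a continuously differentiable homeomorphism such that 1/L ≤ |(h̃(x) − h̃(y))/(x − y)| ≤ L for all x ≠ y and such that h̃' − 1 ∈ L²(ℝ). Then for all complex-valued Schwartz functions f, g ∈ 𝒮(ℝ), the function S(α) := (1/π) ∫_ℝ ((f(α) − f(β))/(α − β)) · (((h̃(α) − α) − (h̃(β) − β))/(h̃(α) − h̃(β))) · g(β) dβ (the integral converging absolutely for each α) satisfies ‖S‖_{L²(ℝ)} ≤ C(L)·‖f'‖_{L²(ℝ)}·‖h̃' − 1‖_{L²(ℝ)}·‖g‖_{L²(ℝ)}. -/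

import Mathlib

/-!
Both factors of the kernel are difference quotients: the first is that of `f`, and by the lower
bi-Lipschitz bound the second is at most `L` times that of `h̃ - id`. Hardy's inequality
`‖t⁻¹ ∫₀ᵗ ψ‖_{L²(0,∞)} ≤ 2 ‖ψ‖_{L²(0,∞)}` (Cauchy–Schwarz with the weights `s^{±1/4}`, then
Tonelli), applied on both sides of the base point, bounds the `L²` norm of a difference quotient
of `F` in one variable by `√8 ‖F'‖₂`, uniformly in the other. Cauchy–Schwarz in `β` and Tonelli
then give `‖S‖₂² ≤ 8‖f'‖₂² · 8L²‖h̃' - 1‖₂² · ‖g‖₂²`.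
-/

open MeasureTheory Complex Set Function
open scoped ENNReal NNReal

section CauchySchwarz

variable {X Y : Type*} [MeasurableSpace X] [MeasurableSpace Y] {μ : Measure X} {ν : Measure Y}

theorem sq_lintegral_mul_le {f g : X → ℝ≥0∞} (hf : AEMeasurable f μ) (hg : AEMeasurable g μ) :
    (∫⁻ x, f x * g x ∂μ) ^ 2 ≤ (∫⁻ x, f x ^ 2 ∂μ) * ∫⁻ x, g x ^ 2 ∂μ := by
  have h := ENNReal.lintegral_mul_le_Lp_mul_Lq μ Real.HolderConjugate.two_two hf hg
  have hsq : ∀ a : ℝ≥0∞, (a ^ (1 / 2 : ℝ)) ^ 2 = a := fun a => by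
    rw [← ENNReal.rpow_natCast, ← ENNReal.rpow_mul]; norm_num
  simp only [ENNReal.rpow_two, Pi.mul_apply] at h
  calc (∫⁻ x, f x * g x ∂μ) ^ 2
      ≤ ((∫⁻ x, f x ^ 2 ∂μ) ^ (1 / 2 : ℝ) * (∫⁻ x, g x ^ 2 ∂μ) ^ (1 / 2 : ℝ)) ^ 2 := by gcongr
    _ = (∫⁻ x, f x ^ 2 ∂μ) * ∫⁻ x, g x ^ 2 ∂μ := by rw [mul_pow, hsq, hsq]

theorem lintegral_sq_lintegral_mul_mul_le [SFinite μ] [SFinite ν] {P Q : X → Y → ℝ≥0∞}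
    {g : Y → ℝ≥0∞} {A B : ℝ≥0∞} (hP : ∀ x, AEMeasurable (P x) ν) (hQ : Measurable (uncurry Q))
    (hg : Measurable g) (hPA : ∀ x, ∫⁻ y, P x y ^ 2 ∂ν ≤ A) (hQB : ∀ y, ∫⁻ x, Q x y ^ 2 ∂μ ≤ B) :
    ∫⁻ x, (∫⁻ y, P x y * (Q x y * g y) ∂ν) ^ 2 ∂μ ≤ A * B * ∫⁻ y, g y ^ 2 ∂ν := by
  have hQg : Measurable (uncurry fun x y => (Q x y * g y) ^ 2) :=
    (hQ.mul (hg.comp measurable_snd)).pow_const 2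
  calc ∫⁻ x, (∫⁻ y, P x y * (Q x y * g y) ∂ν) ^ 2 ∂μ
      ≤ ∫⁻ x, A * ∫⁻ y, (Q x y * g y) ^ 2 ∂ν ∂μ := by
        refine lintegral_mono fun x => (sq_lintegral_mul_le (hP x) ?_).trans ?_
        · exact (hQ.of_uncurry_left.mul hg).aemeasurable
        · gcongr; exact hPA x
    _ = A * ∫⁻ y, ∫⁻ x, (Q x y * g y) ^ 2 ∂μ ∂ν := by
        have hR : Measurable fun x => ∫⁻ y, (Q x y * g y) ^ 2 ∂ν := hQg.lintegral_prod_right'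
        rw [lintegral_const_mul _ hR, lintegral_lintegral_swap hQg.aemeasurable]
    _ = A * ∫⁻ y, (∫⁻ x, Q x y ^ 2 ∂μ) * g y ^ 2 ∂ν := by
        simp_rw [mul_pow]
        congr 1
        exact lintegral_congr fun y => lintegral_mul_const _ (hQ.of_uncurry_right.pow_const 2)
    _ ≤ A * ∫⁻ y, B * g y ^ 2 ∂ν := by gcongr with y; exact hQB y
    _ = A * B * ∫⁻ y, g y ^ 2 ∂ν := by rw [lintegral_const_mul _ (hg.pow_const 2), mul_assoc]

end CauchySchwarz

section Hardy

theorem setLIntegral_Ioc_rpow_neg_half {t : ℝ} (ht : 0 < t) :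
    ∫⁻ s in Ioc 0 t, ENNReal.ofReal (s ^ (-(1 / 2) : ℝ)) = ENNReal.ofReal (2 * √t) := by
  have hint : IntegrableOn (fun s : ℝ => s ^ (-(1 / 2) : ℝ)) (Ioc 0 t) :=
    (intervalIntegrable_iff_integrableOn_Ioc_of_le ht.le).1
      (intervalIntegral.intervalIntegrable_rpow' (by norm_num))
  rw [← ofReal_integral_eq_lintegral_ofReal hint
    (ae_restrict_of_forall_mem measurableSet_Ioc fun s hs => Real.rpow_nonneg hs.1.le _),
    ← intervalIntegral.integral_of_le ht.le, integral_rpow (Or.inl (by norm_num)),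
    Real.sqrt_eq_rpow, Real.zero_rpow (by norm_num)]
  congr 1
  norm_num
  ring

theorem setLIntegral_Ioi_rpow_neg_three_halves {s : ℝ} (hs : 0 < s) :
    ∫⁻ t in Ioi s, ENNReal.ofReal (t ^ (-(3 / 2) : ℝ)) = ENNReal.ofReal (2 / √s) := by
  rw [← ofReal_integral_eq_lintegral_ofReal (integrableOn_Ioi_rpow_of_lt (by norm_num) hs)
    (ae_restrict_of_forall_mem measurableSet_Ioi fun t ht => Real.rpow_nonneg (hs.trans ht).le _),
    integral_Ioi_rpow_of_lt (by norm_num) hs, Real.sqrt_eq_rpow, div_eq_mul_inv 2,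
    ← Real.rpow_neg hs.le]
  congr 1
  norm_num
  ring

theorem ofReal_rpow_sq {s : ℝ} (hs : 0 ≤ s) (a : ℝ) :
    ENNReal.ofReal (s ^ a) ^ 2 = ENNReal.ofReal (s ^ (2 * a)) := by
  rw [← ENNReal.ofReal_pow (Real.rpow_nonneg hs a), ← Real.rpow_natCast, ← Real.rpow_mul hs,
    mul_comm]
  norm_num

theorem sq_setLIntegral_Ioc_le {ψ : ℝ → ℝ≥0∞} (hψ : Measurable ψ) {t : ℝ} (ht : 0 < t) :
    (∫⁻ s in Ioc 0 t, ψ s) ^ 2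
      ≤ ENNReal.ofReal (2 * √t) * ∫⁻ s in Ioc 0 t, ENNReal.ofReal √s * ψ s ^ 2 := by
  set w : ℝ → ℝ≥0∞ := fun s => ENNReal.ofReal (s ^ (1 / 4 : ℝ))
  set v : ℝ → ℝ≥0∞ := fun s => ENNReal.ofReal (s ^ (-(1 / 4) : ℝ))
  have hw : Measurable w := by fun_prop
  have hv : Measurable v := by fun_prop
  have hsplit : ∫⁻ s in Ioc 0 t, ψ s = ∫⁻ s in Ioc 0 t, (w s * ψ s) * v s := by
    refine setLIntegral_congr_fun measurableSet_Ioc fun s hs => ?_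
    rw [mul_comm, ← mul_assoc, ← ENNReal.ofReal_mul (Real.rpow_nonneg hs.1.le _),
      ← Real.rpow_add hs.1]
    norm_num
  have hw2 : ∫⁻ s in Ioc 0 t, (w s * ψ s) ^ 2 = ∫⁻ s in Ioc 0 t, ENNReal.ofReal √s * ψ s ^ 2 := by
    refine setLIntegral_congr_fun measurableSet_Ioc fun s hs => ?_
    rw [mul_pow, ofReal_rpow_sq hs.1.le, Real.sqrt_eq_rpow]
    norm_num
  have hv2 : ∫⁻ s in Ioc 0 t, v s ^ 2 = ENNReal.ofReal (2 * √t) := by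
    rw [← setLIntegral_Ioc_rpow_neg_half ht]
    refine setLIntegral_congr_fun measurableSet_Ioc fun s hs => ?_
    rw [ofReal_rpow_sq hs.1.le]
    norm_num
  rw [hsplit, mul_comm, ← hw2, ← hv2]
  exact sq_lintegral_mul_le (hw.mul hψ).aemeasurable hv.aemeasurable

theorem lintegral_Ioi_mul_setLIntegral_Ioc {k F : ℝ → ℝ≥0∞} (hk : Measurable k)
    (hF : Measurable F) :
    ∫⁻ t in Ioi 0, k t * ∫⁻ s in Ioc 0 t, F s = ∫⁻ s in Ioi 0, (∫⁻ t in Ici s, k t) * F s := by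
  set T : Set (ℝ × ℝ) := {p | p.2 ≤ p.1}
  have hT : MeasurableSet T := measurableSet_le measurable_snd measurable_fst
  have hslice₁ : ∀ t, k t * ∫⁻ s in Ioc 0 t, F s
      = ∫⁻ s in Ioi 0, T.indicator (fun p => k p.1 * F p.2) (t, s) := by
    intro t
    have hind : ∀ s, T.indicator (fun p => k p.1 * F p.2) (t, s)
        = (Iic t).indicator (fun s => k t * F s) s := fun s => by
      simp only [indicator_apply, T, mem_ofPred_eq, mem_Iic]
    simp_rw [hind]
    rw [lintegral_indicator measurableSet_Iic, Measure.restrict_restrict measurableSet_Iic,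
      Iic_inter_Ioi, lintegral_const_mul _ hF]
  have hslice₂ : ∀ s ∈ Ioi (0 : ℝ), (∫⁻ t in Ici s, k t) * F s
      = ∫⁻ t in Ioi 0, T.indicator (fun p => k p.1 * F p.2) (t, s) := by
    intro s hs
    have hind : ∀ t, T.indicator (fun p => k p.1 * F p.2) (t, s)
        = (Ici s).indicator (fun t => k t * F s) t := fun t => by
      simp only [indicator_apply, T, mem_ofPred_eq, mem_Ici]
    simp_rw [hind]
    rw [lintegral_indicator measurableSet_Ici, Measure.restrict_restrict measurableSet_Ici,
      inter_eq_left.2 (Ici_subset_Ioi.2 hs), lintegral_mul_const _ hk]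
  rw [lintegral_congr hslice₁, setLIntegral_congr_fun measurableSet_Ioi hslice₂]
  exact lintegral_lintegral_swap
    (((hk.comp measurable_fst).mul (hF.comp measurable_snd)).indicator hT).aemeasurable

theorem two_mul_sqrt_div_sq {t : ℝ} (ht : 0 < t) : 2 * √t / t ^ 2 = 2 * t ^ (-(3 / 2) : ℝ) := by
  rw [Real.sqrt_eq_rpow, mul_div_assoc, ← Real.rpow_natCast, ← Real.rpow_sub ht]
  norm_num

theorem lintegral_Ioi_sq_average_le {ψ : ℝ → ℝ≥0∞} (hψ : Measurable ψ) :
    ∫⁻ t in Ioi 0, ((∫⁻ s in Ioc 0 t, ψ s) / ENNReal.ofReal t) ^ 2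
      ≤ 4 * ∫⁻ s in Ioi 0, ψ s ^ 2 := by
  set k : ℝ → ℝ≥0∞ := fun t => 2 * ENNReal.ofReal (t ^ (-(3 / 2) : ℝ))
  have hk : Measurable k := by fun_prop
  have hpt : ∀ t ∈ Ioi (0 : ℝ), ((∫⁻ s in Ioc 0 t, ψ s) / ENNReal.ofReal t) ^ 2
      ≤ k t * ∫⁻ s in Ioc 0 t, ENNReal.ofReal √s * ψ s ^ 2 := by
    intro t ht
    have hk_eq : k t = ENNReal.ofReal (2 * √t) / ENNReal.ofReal t ^ 2 := by
      rw [← ENNReal.ofReal_pow ht.le, ← ENNReal.ofReal_div_of_pos (pow_pos ht 2),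
        two_mul_sqrt_div_sq ht, ENNReal.ofReal_mul zero_le_two, ENNReal.ofReal_ofNat]
    calc ((∫⁻ s in Ioc 0 t, ψ s) / ENNReal.ofReal t) ^ 2
        = (∫⁻ s in Ioc 0 t, ψ s) ^ 2 / ENNReal.ofReal t ^ 2 := by
          rw [div_eq_mul_inv, mul_pow, ← ENNReal.inv_pow, ← div_eq_mul_inv]
      _ ≤ ENNReal.ofReal (2 * √t) * (∫⁻ s in Ioc 0 t, ENNReal.ofReal √s * ψ s ^ 2)
            / ENNReal.ofReal t ^ 2 := by
          gcongr; exact sq_setLIntegral_Ioc_le hψ ht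
      _ = k t * ∫⁻ s in Ioc 0 t, ENNReal.ofReal √s * ψ s ^ 2 := by
          rw [hk_eq, div_eq_mul_inv, div_eq_mul_inv, mul_right_comm]
  have hweight : ∀ s ∈ Ioi (0 : ℝ), (∫⁻ t in Ici s, k t) * (ENNReal.ofReal √s * ψ s ^ 2)
      = 4 * ψ s ^ 2 := by
    intro s hs
    rw [lintegral_const_mul _ (by fun_prop), ← Measure.restrict_congr_set Ioi_ae_eq_Ici,
      setLIntegral_Ioi_rpow_neg_three_halves hs, ← mul_assoc, mul_assoc 2,
      ← ENNReal.ofReal_mul (by positivity), div_mul_cancel₀ _ (Real.sqrt_pos.2 hs).ne']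
    norm_num
  calc ∫⁻ t in Ioi 0, ((∫⁻ s in Ioc 0 t, ψ s) / ENNReal.ofReal t) ^ 2
      ≤ ∫⁻ t in Ioi 0, k t * ∫⁻ s in Ioc 0 t, ENNReal.ofReal √s * ψ s ^ 2 :=
        setLIntegral_mono' measurableSet_Ioi hpt
    _ = ∫⁻ s in Ioi 0, (∫⁻ t in Ici s, k t) * (ENNReal.ofReal √s * ψ s ^ 2) :=
        lintegral_Ioi_mul_setLIntegral_Ioc hk (by fun_prop)
    _ = 4 * ∫⁻ s in Ioi 0, ψ s ^ 2 := by
        rw [setLIntegral_congr_fun measurableSet_Ioi hweight, lintegral_const_mul _ (by fun_prop)]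

end Hardy

section DifferenceQuotient

variable {E : Type*} [NormedAddCommGroup E] [NormedSpace ℝ E] {F : ℝ → E}

theorem setLIntegral_Ioi_sq_enorm_sub_div_le (hF : ContDiff ℝ 1 F) (a : ℝ) :
    ∫⁻ x in Ioi a, (‖F x - F a‖ₑ / ‖x - a‖ₑ) ^ 2 ≤ 4 * ∫⁻ x, ‖deriv F x‖ₑ ^ 2 := by
  have hmp : MeasurePreserving (a + ·) volume volume := measurePreserving_add_left volume a
  have hemb : MeasurableEmbedding (a + ·) := (MeasurableEquiv.addLeft a).measurableEmbedding
  set ψ : ℝ → ℝ≥0∞ := fun s => ‖deriv F (a + s)‖ₑ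
  have hψ : Measurable ψ :=
    ((hF.continuous_deriv le_rfl).comp (continuous_const_add a)).enorm.measurable
  have hquot : ∀ t ∈ Ioi (0 : ℝ), (‖F (a + t) - F a‖ₑ / ‖a + t - a‖ₑ) ^ 2
      ≤ ((∫⁻ s in Ioc 0 t, ψ s) / ENNReal.ofReal t) ^ 2 := by
    intro t ht
    rw [add_sub_cancel_left, Real.enorm_of_nonneg (le_of_lt ht)]
    gcongr
    calc ‖F (a + t) - F a‖ₑ ≤ ∫⁻ x in Icc a (a + t), ‖deriv F x‖ₑ :=
          enorm_sub_le_lintegral_deriv_of_contDiffOn_Icc hF.contDiffOn (by simpa using le_of_lt ht)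
      _ = ∫⁻ s in Ioc 0 t, ψ s := by
          rw [← hmp.setLIntegral_comp_preimage_emb hemb, preimage_const_add_Icc,
            restrict_Ioc_eq_restrict_Icc, sub_self, add_sub_cancel_left]
  calc ∫⁻ x in Ioi a, (‖F x - F a‖ₑ / ‖x - a‖ₑ) ^ 2
      = ∫⁻ t in Ioi 0, (‖F (a + t) - F a‖ₑ / ‖a + t - a‖ₑ) ^ 2 := by
        rw [← hmp.setLIntegral_comp_preimage_emb hemb, preimage_const_add_Ioi]
        simp
    _ ≤ ∫⁻ t in Ioi 0, ((∫⁻ s in Ioc 0 t, ψ s) / ENNReal.ofReal t) ^ 2 :=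
        setLIntegral_mono' measurableSet_Ioi hquot
    _ ≤ 4 * ∫⁻ s in Ioi 0, ψ s ^ 2 := lintegral_Ioi_sq_average_le hψ
    _ ≤ 4 * ∫⁻ s, ψ s ^ 2 := by gcongr; exact Measure.restrict_le_self
    _ = 4 * ∫⁻ x, ‖deriv F x‖ₑ ^ 2 := by
        rw [lintegral_add_left_eq_self (fun x => ‖deriv F x‖ₑ ^ 2)]

theorem lintegral_sq_enorm_sub_div_le (hF : ContDiff ℝ 1 F) (a : ℝ) :
    ∫⁻ x, (‖F x - F a‖ₑ / ‖x - a‖ₑ) ^ 2 ≤ 8 * ∫⁻ x, ‖deriv F x‖ₑ ^ 2 := by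
  set G : ℝ → ℝ≥0∞ := fun x => (‖F x - F a‖ₑ / ‖x - a‖ₑ) ^ 2
  have hleft : ∫⁻ x in Iic a, G x ≤ 4 * ∫⁻ x, ‖deriv F x‖ₑ ^ 2 := by
    have hmp := Measure.measurePreserving_neg (volume : Measure ℝ)
    have hemb := (MeasurableEquiv.neg ℝ).measurableEmbedding
    have hreflect := setLIntegral_Ioi_sq_enorm_sub_div_le (F := fun x => F (-x))
      (hF.comp contDiff_neg) (-a)
    simp only [deriv_comp_neg, enorm_neg, neg_neg] at hreflect
    calc ∫⁻ x in Iic a, G x = ∫⁻ x in Iio a, G x := by rw [Measure.restrict_congr_set Iio_ae_eq_Iic]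
      _ = ∫⁻ x in Ioi (-a), G (-x) := by
          rw [← hmp.setLIntegral_comp_preimage_emb hemb]
          simp
      _ = ∫⁻ x in Ioi (-a), (‖F (-x) - F a‖ₑ / ‖x - -a‖ₑ) ^ 2 := by
          refine lintegral_congr fun x => ?_
          rw [← enorm_neg (x - -a), show -(x - -a) = -x - a by ring]
      _ ≤ 4 * ∫⁻ x, ‖deriv F (-x)‖ₑ ^ 2 := hreflect
      _ = 4 * ∫⁻ x, ‖deriv F x‖ₑ ^ 2 := by
          rw [lintegral_neg_eq_self (fun x => ‖deriv F x‖ₑ ^ 2)]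
  have hright : ∫⁻ x in Ioi a, G x ≤ 4 * ∫⁻ x, ‖deriv F x‖ₑ ^ 2 :=
    setLIntegral_Ioi_sq_enorm_sub_div_le hF a
  calc ∫⁻ x, G x = (∫⁻ x in Iic a, G x) + ∫⁻ x in Ioi a, G x := by
        rw [← compl_Iic]; exact (lintegral_add_compl G measurableSet_Iic).symm
    _ ≤ (4 * ∫⁻ x, ‖deriv F x‖ₑ ^ 2) + 4 * ∫⁻ x, ‖deriv F x‖ₑ ^ 2 := add_le_add hleft hright
    _ = 8 * ∫⁻ x, ‖deriv F x‖ₑ ^ 2 := by ring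

end DifferenceQuotient

theorem eLpNorm_two_sq {X E : Type*} [MeasurableSpace X] [NormedAddCommGroup E] {μ : Measure X}
    (u : X → E) : eLpNorm u 2 μ ^ 2 = ∫⁻ x, ‖u x‖ₑ ^ 2 ∂μ := by
  simpa using eLpNorm_nnreal_pow_eq_lintegral (f := u) (μ := μ) (p := 2) two_ne_zero

theorem SchwartzMap.exists_lipschitzWith {F : Type*} [NormedAddCommGroup F] [NormedSpace ℝ F]
    (f : SchwartzMap ℝ F) : ∃ K, LipschitzWith K f :=
  ⟨⟨SchwartzMap.seminorm ℝ 0 0 (SchwartzMap.derivCLM ℝ F f), apply_nonneg _ _⟩,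
    lipschitzWith_of_nnnorm_deriv_le f.differentiable fun x => NNReal.coe_le_coe.1 <| by
      rw [coe_nnnorm, ← SchwartzMap.derivCLM_apply ℝ]
      exact SchwartzMap.norm_le_seminorm ℝ _ x⟩

theorem deriv_sub_id {h : ℝ → ℝ} (hh : Differentiable ℝ h) (x : ℝ) :
    deriv (fun y => h y - y) x = deriv h x - 1 := by
  rw [deriv_fun_sub (hh x) differentiableAt_fun_id, deriv_id'']

theorem enorm_div_ofReal_sub (z : ℂ) {a b : ℝ} (hab : a ≠ b) :
    ‖z / ((a - b : ℝ) : ℂ)‖ₑ = ‖z‖ₑ / ‖a - b‖ₑ := by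
  have : ‖((a - b : ℝ) : ℂ)‖₊ ≠ 0 := by simpa [sub_eq_zero] using hab
  rw [enorm_eq_nnnorm, enorm_eq_nnnorm, enorm_eq_nnnorm, nnnorm_div, ENNReal.coe_div this,
    Complex.nnnorm_real]

theorem enorm_inv_pi_mul_integral_le (u : ℝ → ℂ) :
    ‖((1 / Real.pi : ℝ) : ℂ) * ∫ x, u x‖ₑ ≤ ∫⁻ x, ‖u x‖ₑ := by
  have hπ : ‖((1 / Real.pi : ℝ) : ℂ)‖ₑ ≤ 1 := by
    rw [← ofReal_norm, ENNReal.ofReal_le_one, Complex.norm_real,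
      Real.norm_of_nonneg (by positivity)]
    exact div_le_one_of_le₀ (by linarith [Real.pi_gt_three]) Real.pi_pos.le
  rw [enorm_mul, ← one_mul (∫⁻ x, _)]
  exact mul_le_mul' hπ (enorm_integral_le_lintegral_enorm _)

section BiLipschitz

variable {h : ℝ → ℝ} {L : ℝ}

theorem abs_sub_le_mul_abs_sub (hL : 0 < L)
    (hlow : ∀ x y, x ≠ y → 1 / L ≤ |(h x - h y) / (x - y)|) (x y : ℝ) :
    |x - y| ≤ L * |h x - h y| := by
  rcases eq_or_ne x y with rfl | hne
  · simp
  have h := hlow x y hne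
  rwa [abs_div, le_div_iff₀ (abs_pos.2 (sub_ne_zero.2 hne)), one_div, inv_mul_le_iff₀ hL] at h

theorem abs_div_sub_le_of_abs_sub_le (hlow : ∀ x y, |x - y| ≤ L * |h x - h y|) {x y : ℝ}
    (hxy : x ≠ y) (N : ℝ) : |N / (h x - h y)| ≤ L * (|N| / |x - y|) := by
  have hxy' : 0 < |x - y| := abs_pos.2 (sub_ne_zero.2 hxy)
  have hL : 0 < L := pos_of_mul_pos_left (hxy'.trans_le (hlow x y)) (abs_nonneg _)
  rw [abs_div, mul_div_assoc', le_div_iff₀ hxy', div_mul_eq_mul_div, div_le_iff₀]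
  · calc |N| * |x - y| ≤ |N| * (L * |h x - h y|) := by gcongr; exact hlow x y
      _ = _ := by ring
  · exact abs_pos.2 fun h0 => by simpa [h0] using hxy'.trans_le (hlow x y)

theorem abs_sub_sub_div_sub_le (hlow : ∀ x y, |x - y| ≤ L * |h x - h y|) (x y : ℝ) :
    |((h x - x) - (h y - y)) / (h x - h y)| ≤ 1 + L := by
  have hL : 0 < L :=
    pos_of_mul_pos_left ((by norm_num : (0 : ℝ) < |1 - 0|).trans_le (hlow 1 0)) (abs_nonneg _)
  rw [abs_div]
  refine div_le_of_le_mul₀ (abs_nonneg _) (by linarith) ?_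
  calc |(h x - x) - (h y - y)| = |(h x - h y) - (x - y)| := by ring_nf
    _ ≤ |h x - h y| + |x - y| := abs_sub _ _
    _ ≤ |h x - h y| + L * |h x - h y| := by gcongr; exact hlow x y
    _ = (1 + L) * |h x - h y| := by ring

end BiLipschitz

noncomputable def commutatorKernel (h : ℝ → ℝ) (f g : ℝ → ℂ) (α β : ℝ) : ℂ :=
  ((f α - f β) / ((α - β : ℝ) : ℂ)) * ((((h α - α) - (h β - β)) / (h α - h β) : ℝ) : ℂ) * g β

namespace commutatorKernel

variable {h : ℝ → ℝ} {L : ℝ} {f g : ℝ → ℂ}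

theorem enorm_le (hlow : ∀ x y, |x - y| ≤ L * |h x - h y|) (α β : ℝ) :
    ‖commutatorKernel h f g α β‖ₑ ≤ ‖f α - f β‖ₑ / ‖α - β‖ₑ *
      (ENNReal.ofReal L * (‖(h α - α) - (h β - β)‖ₑ / ‖α - β‖ₑ) * ‖g β‖ₑ) := by
  rcases eq_or_ne α β with rfl | hne
  · simp [commutatorKernel]
  have hpos : 0 < |α - β| := abs_pos.2 (sub_ne_zero.2 hne)
  have hsecond : ‖((((h α - α) - (h β - β)) / (h α - h β) : ℝ) : ℂ)‖ₑ
      ≤ ENNReal.ofReal L * (‖(h α - α) - (h β - β)‖ₑ / ‖α - β‖ₑ) := by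
    rw [enorm_eq_nnnorm, Complex.nnnorm_real, ← enorm_eq_nnnorm, Real.enorm_eq_ofReal_abs,
      Real.enorm_eq_ofReal_abs, Real.enorm_eq_ofReal_abs, ← ENNReal.ofReal_div_of_pos hpos,
      ← ENNReal.ofReal_mul (pos_of_mul_pos_left (hpos.trans_le (hlow α β)) (abs_nonneg _)).le]
    exact ENNReal.ofReal_le_ofReal (abs_div_sub_le_of_abs_sub_le hlow hne _)
  rw [commutatorKernel, enorm_mul, enorm_mul, enorm_div_ofReal_sub _ hne, mul_assoc]
  gcongr

theorem norm_le {K : ℝ≥0} (hlow : ∀ x y, |x - y| ≤ L * |h x - h y|) (hf : LipschitzWith K f)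
    (α β : ℝ) : ‖commutatorKernel h f g α β‖ ≤ K * (1 + L) * ‖g β‖ := by
  have hfirst : ‖(f α - f β) / ((α - β : ℝ) : ℂ)‖ ≤ K := by
    rw [norm_div, Complex.norm_real, ← dist_eq_norm, Real.norm_eq_abs, ← Real.dist_eq]
    exact div_le_of_le_mul₀ dist_nonneg K.coe_nonneg (hf.dist_le_mul α β)
  rw [commutatorKernel, norm_mul, norm_mul, Complex.norm_real, Real.norm_eq_abs]
  gcongr
  exact abs_sub_sub_div_sub_le hlow α β

theorem measurable (hh : Continuous h) (hf : Continuous f) (hg : Continuous g) (α : ℝ) :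
    Measurable (commutatorKernel h f g α) := by
  unfold commutatorKernel
  fun_prop

theorem integrable {K : ℝ≥0} (hlow : ∀ x y, |x - y| ≤ L * |h x - h y|) (hh : Continuous h)
    (hf : LipschitzWith K f) (hg : Continuous g) (hgi : Integrable g) (α : ℝ) :
    Integrable (commutatorKernel h f g α) :=
  (hgi.norm.const_mul _).mono' (measurable hh hf.continuous hg α).aestronglyMeasurable
    (.of_forall (norm_le hlow hf α))

theorem lintegral_sq_lintegral_enorm_le (hlow : ∀ x y, |x - y| ≤ L * |h x - h y|)
    (hh : ContDiff ℝ 1 h) (hf : ContDiff ℝ 1 f) (hg : Measurable g) :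
    ∫⁻ α, (∫⁻ β, ‖commutatorKernel h f g α β‖ₑ) ^ 2
      ≤ 8 * (∫⁻ x, ‖deriv f x‖ₑ ^ 2) * (ENNReal.ofReal L ^ 2 * (8 * ∫⁻ x, ‖deriv h x - 1‖ₑ ^ 2))
        * ∫⁻ x, ‖g x‖ₑ ^ 2 := by
  have hF : ContDiff ℝ 1 fun x => h x - x := hh.sub contDiff_id
  have hP : ∀ α, ∫⁻ β, (‖f α - f β‖ₑ / ‖α - β‖ₑ) ^ 2 ≤ 8 * ∫⁻ x, ‖deriv f x‖ₑ ^ 2 := by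
    intro α
    simp_rw [enorm_sub_rev (f α), enorm_sub_rev α]
    exact lintegral_sq_enorm_sub_div_le hf α
  have hQ : ∀ β, ∫⁻ α, (ENNReal.ofReal L * (‖(h α - α) - (h β - β)‖ₑ / ‖α - β‖ₑ)) ^ 2
      ≤ ENNReal.ofReal L ^ 2 * (8 * ∫⁻ x, ‖deriv h x - 1‖ₑ ^ 2) := by
    intro β
    simp_rw [mul_pow, ← deriv_sub_id (hh.differentiable one_ne_zero)]
    rw [lintegral_const_mul' _ _ (by simp)]
    gcongr
    exact lintegral_sq_enorm_sub_div_le hF β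
  calc ∫⁻ α, (∫⁻ β, ‖commutatorKernel h f g α β‖ₑ) ^ 2
      ≤ ∫⁻ α, (∫⁻ β, ‖f α - f β‖ₑ / ‖α - β‖ₑ *
          (ENNReal.ofReal L * (‖(h α - α) - (h β - β)‖ₑ / ‖α - β‖ₑ) * ‖g β‖ₑ)) ^ 2 := by
        gcongr with α β
        exact enorm_le hlow α β
    _ ≤ _ := by
        have hhc := hh.continuous
        have hfc := hf.continuous
        refine lintegral_sq_lintegral_mul_mul_le (P := fun α β => ‖f α - f β‖ₑ / ‖α - β‖ₑ)
          (Q := fun α β => ENNReal.ofReal L * (‖(h α - α) - (h β - β)‖ₑ / ‖α - β‖ₑ))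
          (fun α => by fun_prop) (by fun_prop) hg.enorm hP hQ

end commutatorKernel

/-- for every `L ≥ 1` there is `C(L) > 0` so that for every `C¹`
bi-Lipschitz homeomorphism `h̃ : ℝ → ℝ` with `1/L ≤ |(h̃(x) − h̃(y))/(x − y)| ≤ L` and
`h̃' − 1 ∈ L²`, and all Schwartz `f, g`, the function
`S(α) = (1/π) ∫ ((f(α)−f(β))/(α−β)) · (((h̃(α)−α)−(h̃(β)−β))/(h̃(α)−h̃(β))) · g(β) dβ`
(absolutely convergent) satisfies `‖S‖_{L²} ≤ C(L)‖f'‖_{L²}‖h̃' − 1‖_{L²}‖g‖_{L²}`. -/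
theorem statement17 : ∀ L : ℝ, 1 ≤ L → ∃ C : ℝ, 0 < C ∧
    ∀ htil : ℝ → ℝ,
      ContDiff ℝ 1 htil → Function.Bijective htil →
      (∀ x y : ℝ, x ≠ y →
        1 / L ≤ |(htil x - htil y) / (x - y)| ∧ |(htil x - htil y) / (x - y)| ≤ L) →
      MemLp (fun x : ℝ => deriv htil x - 1) 2 volume →
      ∀ f g : SchwartzMap ℝ ℂ,
        (∀ α : ℝ, Integrable (fun β : ℝ =>
            ((f α - f β) / ((α - β : ℝ) : ℂ)) *
              ((((htil α - α) - (htil β - β)) / (htil α - htil β) : ℝ) : ℂ) * g β)) ∧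
        eLpNorm (fun α : ℝ => ((1 / Real.pi : ℝ) : ℂ) *
            ∫ β : ℝ, ((f α - f β) / ((α - β : ℝ) : ℂ)) *
              ((((htil α - α) - (htil β - β)) / (htil α - htil β) : ℝ) : ℂ) * g β) 2 volume
          ≤ ENNReal.ofReal C * eLpNorm (deriv (⇑f)) 2 volume *
              eLpNorm (fun x : ℝ => deriv htil x - 1) 2 volume *
              eLpNorm (⇑g) 2 volume := by
  intro L hL
  refine ⟨8 * L, by positivity, fun htil hC1 _ hLip _ f g => ?_⟩
  have hlow := abs_sub_le_mul_abs_sub (by positivity) fun x y hxy => (hLip x y hxy).1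
  obtain ⟨K, hK⟩ := f.exists_lipschitzWith
  refine ⟨commutatorKernel.integrable hlow hC1.continuous hK g.continuous g.integrable, ?_⟩
  rw [← ENNReal.pow_le_pow_left_iff two_ne_zero]
  calc _ = ∫⁻ α, ‖((1 / Real.pi : ℝ) : ℂ) * ∫ β, commutatorKernel htil f g α β‖ₑ ^ 2 :=
        eLpNorm_two_sq _
    _ ≤ ∫⁻ α, (∫⁻ β, ‖commutatorKernel htil f g α β‖ₑ) ^ 2 := by
        gcongr with α; exact enorm_inv_pi_mul_integral_le _
    _ ≤ _ := commutatorKernel.lintegral_sq_lintegral_enorm_le hlow hC1 (f.smooth 1)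
        g.continuous.measurable
    _ = _ := by
        rw [mul_pow, mul_pow, mul_pow, eLpNorm_two_sq, eLpNorm_two_sq, eLpNorm_two_sq,
          ENNReal.ofReal_mul (by norm_num), mul_pow, ENNReal.ofReal_ofNat]
        ring
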